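/- arXiv:2209.00968 — 3 statements merged into one kernel-verified Lean document; each statement's English description precedes it below -/
import Mathlib

section
/- Let P_X be a probability distribution on a finite set 𝒳, let V_{Z|X} be a channel to a finite set 𝒵, and let Q_Z be the uniform distribution on 𝒵. Define I(α) = I(P_X × [ᾱ·Q_Z + α·V_{Z|X}]) (the mutual information of the joint distribution P_X(x)·[(1−α)Q_Z(z)+α·V_{Z|X}(z|x)]). If I(P_X × V_{Z|X}) > 0, then for every α ∈ (0,1), I(α) < α·I(P_X × V_{Z|X}). -/
/-!
Both mutual informations are written through their channels,
`I(P × K) = Σₓ P(x) Σ_z K(z|x) log (K(z|x) / (PK)(z))`. The mixture channel `c + α V`, with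
`c = (1 - α) / |𝒵| > 0`, has output marginal `c + α (PV)`, so the claim reduces term by term to the
two-term log-sum inequality `(c + a) log ((c + a) / (c + b)) ≤ a log (a / b)` with `a = α V(z|x)`,
`b = α (PV)(z)`. It is strict whenever `a ≠ b`, and `I(P × V) > 0` provides such a term of positive
weight.
-/

open Finset

/-- Mutual information of a joint distribution `j` on `𝒳 × 𝒵`,
`I(j) = Σ_{x,z} j(x,z)·log( j(x,z) / (j_X(x)·j_Z(z)) )`. -/
noncomputable def mutualInfo {X Z : Type*} [Fintype X] [Fintype Z]
    (j : X → Z → ℝ) : ℝ :=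
  ∑ x, ∑ z, j x z * Real.log (j x z / ((∑ z', j x z') * (∑ x', j x' z)))

open Real

/-- The two-term log-sum inequality: strict convexity of `t ↦ t log t` at the points `1` and `a / b`
with weights `c / (c + b)` and `b / (c + b)`. -/
theorem add_mul_log_div_add_lt_mul_log_div {a b c : ℝ} (hc : 0 < c) (ha : 0 ≤ a) (hb : 0 < b)
    (hab : a ≠ b) : (c + a) * log ((c + a) / (c + b)) < a * log (a / b) := by
  have hcb : 0 < c + b := by positivity
  have hne : (1 : ℝ) ≠ a / b := by rwa [ne_comm, ne_eq, div_eq_one_iff_eq hb.ne']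
  have hconv := strictConvexOn_mul_log.2 (Set.mem_Ici.2 zero_le_one)
    (Set.mem_Ici.2 (div_nonneg ha hb.le)) hne (div_pos hc hcb) (div_pos hb hcb)
    (by rw [← add_div, div_self hcb.ne'])
  have hmix : c / (c + b) + b / (c + b) * (a / b) = (c + a) / (c + b) := by field_simp
  simp only [smul_eq_mul, mul_one, hmix, log_one, mul_zero, zero_add] at hconv
  calc (c + a) * log ((c + a) / (c + b))
      = (c + b) * ((c + a) / (c + b) * log ((c + a) / (c + b))) := by field_simp
    _ < (c + b) * (b / (c + b) * (a / b * log (a / b))) := mul_lt_mul_of_pos_left hconv hcb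
    _ = a * log (a / b) := by field_simp

theorem mul_mixture_mul_log_lt {α c p v m : ℝ} (hα : 0 < α) (hc : 0 < c) (hp : 0 < p)
    (hv : 0 < v) (hvm : p * v ≤ m) (hne : v ≠ m) :
    p * ((c + α * v) * log ((c + α * v) / (c + α * m))) < α * (p * (v * log (v / m))) := by
  have hm : 0 < m := (mul_pos hp hv).trans_le hvm
  have key := add_mul_log_div_add_lt_mul_log_div hc (by positivity) (mul_pos hα hm)
    (mt (mul_left_cancel₀ hα.ne') hne)
  rw [mul_div_mul_left _ _ hα.ne'] at key
  calc p * ((c + α * v) * log ((c + α * v) / (c + α * m)))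
      < p * (α * v * log (v / m)) := mul_lt_mul_of_pos_left key hp
    _ = α * (p * (v * log (v / m))) := by ring

theorem mul_mixture_mul_log_le {α c p v m : ℝ} (hα : 0 < α) (hc : 0 < c) (hp : 0 ≤ p)
    (hv : 0 ≤ v) (hvm : p * v ≤ m) :
    p * ((c + α * v) * log ((c + α * v) / (c + α * m))) ≤ α * (p * (v * log (v / m))) := by
  rcases hp.eq_or_lt with rfl | hp
  · simp
  rcases hv.eq_or_lt with rfl | hv
  · have hm : 0 ≤ m := by simpa using hvm
    simp only [mul_zero, add_zero, zero_mul]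
    have hlog : log (c / (c + α * m)) ≤ 0 :=
      log_nonpos (by positivity) (div_le_one_of_le₀ (by nlinarith) (by positivity))
    exact mul_nonpos_of_nonneg_of_nonpos hp.le (mul_nonpos_of_nonneg_of_nonpos hc.le hlog)
  rcases eq_or_ne v m with rfl | hne
  · simp
  exact (mul_mixture_mul_log_lt hα hc hp hv hvm hne).le

section Channel

variable {X Z : Type*} [Fintype X] [Fintype Z]

theorem mutualInfo_mul_channel (P : X → ℝ) (K : X → Z → ℝ) (hK : ∀ x, ∑ z, K x z = 1) :
    mutualInfo (fun x z => P x * K x z) =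
      ∑ x, P x * ∑ z, K x z * log (K x z / ∑ x', P x' * K x' z) := by
  unfold mutualInfo
  refine sum_congr rfl fun x _ => ?_
  rw [← mul_sum, hK, mul_one, mul_sum]
  refine sum_congr rfl fun z _ => ?_
  rcases eq_or_ne (P x) 0 with hPx | hPx
  · simp [hPx]
  · rw [mul_div_mul_left _ _ hPx, mul_assoc]

theorem exists_ne_marginal_of_mutualInfo_pos {P : X → ℝ} {V : X → Z → ℝ}
    (hV : ∀ x, ∑ z, V x z = 1) (hI : 0 < mutualInfo (fun x z => P x * V x z)) :
    ∃ x z, P x ≠ 0 ∧ V x z ≠ 0 ∧ V x z ≠ ∑ x', P x' * V x' z := by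
  by_contra! h
  refine hI.ne' ?_
  rw [mutualInfo_mul_channel P V hV]
  refine sum_eq_zero fun x _ => ?_
  rcases eq_or_ne (P x) 0 with hPx | hPx
  · simp [hPx]
  refine mul_eq_zero_of_right _ (sum_eq_zero fun z _ => ?_)
  rcases eq_or_ne (V x z) 0 with hVxz | hVxz
  · simp [hVxz]
  · rw [← h x z hPx hVxz, div_self hVxz, log_one, mul_zero]

end Channel

/-- with `Q_Z` uniform on `𝒵`, if `I(P_X × V_{Z|X}) > 0` then for
every `α ∈ (0,1)`,
`I(P_X × [(1−α)·Q_Z + α·V_{Z|X}]) < α · I(P_X × V_{Z|X})`. -/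
theorem mutualInfo_mixture_strict_lt
    {X Z : Type*} [Fintype X] [Fintype Z] [Nonempty Z]
    (P : X → ℝ) (V : X → Z → ℝ)
    (hP : ∀ x, 0 ≤ P x) (hPsum : ∑ x, P x = 1)
    (hV : ∀ x z, 0 ≤ V x z) (hVsum : ∀ x, ∑ z, V x z = 1)
    (hI : 0 < mutualInfo (fun x z => P x * V x z))
    (α : ℝ) (hα : α ∈ Set.Ioo (0 : ℝ) 1) :
    mutualInfo (fun x z =>
        P x * ((1 - α) * (1 / (Fintype.card Z : ℝ)) + α * V x z)) <
      α * mutualInfo (fun x z => P x * V x z) := by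
  obtain ⟨hα0, hα1⟩ := hα
  set c := (1 - α) * (1 / (Fintype.card Z : ℝ)) with hc_def
  have hc : 0 < c := mul_pos (sub_pos.2 hα1) (by positivity)
  have hWsum : ∀ x, ∑ z, (c + α * V x z) = 1 := fun x => by
    rw [sum_add_distrib, sum_const, card_univ, nsmul_eq_mul, ← mul_sum, hVsum, hc_def]
    field_simp
    ring
  have hWcol : ∀ z, ∑ x, P x * (c + α * V x z) = c + α * ∑ x, P x * V x z := fun z => by
    rw [mul_sum]
    simp only [mul_add, sum_add_distrib, ← sum_mul, hPsum, one_mul, mul_left_comm (P _)]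
  have hjoint : ∀ x z, P x * V x z ≤ ∑ x', P x' * V x' z := fun x z =>
    single_le_sum (f := fun x' => P x' * V x' z) (fun x' _ => mul_nonneg (hP x') (hV x' z))
      (mem_univ x)
  obtain ⟨x₀, z₀, hPx₀, hVx₀, hne⟩ := exists_ne_marginal_of_mutualInfo_pos hVsum hI
  rw [mutualInfo_mul_channel P (fun x z => c + α * V x z) hWsum, mutualInfo_mul_channel P V hVsum]
  simp only [mul_sum]
  simp only [hWcol]
  have hle : ∀ x z, _ := fun x z =>
    mul_mixture_mul_log_le hα0 hc (hP x) (hV x z) (hjoint x z)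
  refine sum_lt_sum (fun x _ => sum_le_sum fun z _ => hle x z)
    ⟨x₀, mem_univ _, sum_lt_sum (fun z _ => hle x₀ z) ⟨z₀, mem_univ _, ?_⟩⟩
  exact mul_mixture_mul_log_lt hα0 hc ((hP x₀).lt_of_ne' hPx₀) ((hV x₀ z₀).lt_of_ne' hVx₀)
    (hjoint x₀ z₀) hne
end

section
/- (Caratheodory reduction for pairwise distributions) Let T be uniform on {1,…,n} and let P_{TXZ} be a joint distribution on {1,…,n}×𝒳×𝒵 with 𝒳, 𝒵 finite. Define P̄_{XZX̃}(x,z,x̃) = Σ_t P_T(t)·P_{XZ|T}(x,z|t)·P_{XZ|T}(x̃,z|t)/P_{Z|T}(z|t) (with 0/0 = 0). Then there exists a random variable U with alphabet size |𝒰| ≤ |𝒳|²·|𝒵| and a joint distribution P_{UXZ} such that for all (x,z,x̃): Σ_u P_{UZ}(u,z)·P_{X|UZ}(x|u,z)·P_{X|UZ}(x̃|u,z) = P̄_{XZX̃}(x,z,x̃). -/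
open Finset
open Module

/-- Carathéodory reduction for pairwise distributions: with `T`
uniform on `{1,…,n}` and conditional distributions `p t` on `𝒳 × 𝒵`, the
pairwise distribution
`P̄(x,z,x̃) = (1/n)·Σ_t p_t(x,z)·p_t(x̃,z)/p_{t,Z}(z)`
can be represented using an auxiliary variable `U` with at most `|𝒳|²·|𝒵|`
values: there are weights `w u` and distributions `q u` on `𝒳 × 𝒵` with
`Σ_u w_u·q_u(x,z)·q_u(x̃,z)/q_{u,Z}(z) = P̄(x,z,x̃)` for all `(x,z,x̃)`. -/
theorem caratheodory_pairwise
    {𝒳 𝒵 : Type*} [Fintype 𝒳] [Fintype 𝒵]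
    (n : ℕ) (hn : 0 < n)
    (p : Fin n → 𝒳 × 𝒵 → ℝ)
    (hp : ∀ t a, 0 ≤ p t a) (hpsum : ∀ t, ∑ a, p t a = 1) :
    ∃ (m : ℕ) (w : Fin m → ℝ) (q : Fin m → 𝒳 × 𝒵 → ℝ),
      m ≤ Fintype.card 𝒳 ^ 2 * Fintype.card 𝒵 ∧
      (∀ u, 0 ≤ w u) ∧ (∑ u, w u = 1) ∧
      (∀ u a, 0 ≤ q u a) ∧ (∀ u, ∑ a, q u a = 1) ∧
      ∀ x xt z,
        (∑ u, w u * (q u (x, z) * q u (xt, z) / (∑ x', q u (x', z)))) =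
          (1 / (n : ℝ)) * ∑ t, p t (x, z) * p t (xt, z) / (∑ x', p t (x', z)) := by
  classical
  rcases isEmpty_or_nonempty (𝒳 × 𝒵) with hE | hE
  · exact absurd (hpsum ⟨0, hn⟩) (by simp)
  have hX : Nonempty 𝒳 := ⟨(Classical.arbitrary (𝒳 × 𝒵)).1⟩
  have hZ : Nonempty 𝒵 := ⟨(Classical.arbitrary (𝒳 × 𝒵)).2⟩
  set d : ℕ := Fintype.card 𝒳 ^ 2 * Fintype.card 𝒵 with hd
  have hd1 : 0 < d := by
    have h1 : 0 < Fintype.card 𝒳 := Fintype.card_pos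
    have h2 : 0 < Fintype.card 𝒵 := Fintype.card_pos
    positivity
  -- the embedding into ℝ^{𝒳×𝒳×𝒵}
  let g : (𝒳 × 𝒵 → ℝ) → ((𝒳 × 𝒳 × 𝒵) → ℝ) := fun q a =>
    q (a.1, a.2.2) * q (a.2.1, a.2.2) / (∑ x', q (x', a.2.2))
  -- sum functional
  let L : ((𝒳 × 𝒳 × 𝒵) → ℝ) →ₗ[ℝ] ℝ :=
    { toFun := fun f => ∑ a, f a
      map_add' := by intro f g; simp [Finset.sum_add_distrib]
      map_smul' := by intro c f; simp [Finset.mul_sum]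
      }
  have hfinE : finrank ℝ ((𝒳 × 𝒳 × 𝒵) → ℝ) = d := by
    simp [hd, Fintype.card_prod, pow_two]; ring
  have hLsurj : Function.Surjective L := by
    intro r
    obtain ⟨a0⟩ : Nonempty (𝒳 × 𝒳 × 𝒵) := hE.map (fun a => (a.1, a.1, a.2))
    refine ⟨r • (Pi.single a0 1 : (𝒳 × 𝒳 × 𝒵) → ℝ), ?_⟩
    simp [L, Finset.mul_sum, Finset.sum_pi_single]
  have hker : finrank ℝ (LinearMap.ker L) = d - 1 := by
    have h1 := LinearMap.finrank_range_add_finrank_ker L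
    rw [LinearMap.range_eq_top.2 hLsurj] at h1
    simp [finrank_top, hfinE] at h1
    omega
  -- each g (p t) lies in the hyperplane L = 1
  have hLg : ∀ t, L (g (p t)) = 1 := by
    intro t
    have key : ∀ z : 𝒵, (∑ x : 𝒳, p t (x, z)) * (∑ x : 𝒳, p t (x, z)) /
        (∑ x : 𝒳, p t (x, z)) = ∑ x : 𝒳, p t (x, z) := by
      intro z
      rcases eq_or_ne (∑ x : 𝒳, p t (x, z)) 0 with h | h
      · simp [h]
      · field_simp
    calc L (g (p t)) = ∑ x : 𝒳, ∑ xt : 𝒳, ∑ z : 𝒵,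
          p t (x, z) * p t (xt, z) / (∑ x', p t (x', z)) := by
          simp [L, g, Fintype.sum_prod_type]
      _ = ∑ x : 𝒳, ∑ z : 𝒵, ∑ xt : 𝒳,
          p t (x, z) * p t (xt, z) / (∑ x', p t (x', z)) :=
          Finset.sum_congr rfl fun x _ => Finset.sum_comm
      _ = ∑ z : 𝒵, ∑ x : 𝒳, ∑ xt : 𝒳,
          p t (x, z) * p t (xt, z) / (∑ x', p t (x', z)) := Finset.sum_comm
      _ = ∑ z : 𝒵, (∑ x : 𝒳, p t (x, z)) * (∑ x : 𝒳, p t (x, z)) /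
          (∑ x', p t (x', z)) := by
          refine Finset.sum_congr rfl fun z _ => ?_
          rw [Finset.sum_mul_sum, Finset.sum_div]
          refine Finset.sum_congr rfl fun x _ => ?_
          rw [Finset.sum_div]
      _ = ∑ z : 𝒵, ∑ x : 𝒳, p t (x, z) := Finset.sum_congr rfl fun z _ => key z
      _ = 1 := by rw [← hpsum t, Fintype.sum_prod_type, Finset.sum_comm]
  -- the target point is in the convex hull of the g (p t)
  set S : Set ((𝒳 × 𝒳 × 𝒵) → ℝ) := Set.range fun t => g (p t) with hS
  set v : (𝒳 × 𝒳 × 𝒵) → ℝ := ∑ t, (1 / (n : ℝ)) • g (p t) with hv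
  have hvmem : v ∈ convexHull ℝ S := by
    have h1 : ∑ t : Fin n, (1 / (n : ℝ)) = 1 := by
      simp
      field_simp
    have := Finset.centerMass_mem_convexHull (Finset.univ : Finset (Fin n))
      (w := fun _ => 1 / (n : ℝ)) (z := fun t => g (p t))
      (by intro i _; positivity) (by rw [h1]; norm_num)
      (by intro i _; exact Set.mem_range_self i)
    rwa [Finset.centerMass_eq_of_sum_1 _ _ h1] at this
  obtain ⟨ι, hι, pts, wt, hrange, hai, hwpos, hwsum, hwv⟩ :=
    eq_pos_convex_span_of_mem_convexHull hvmem
  -- cardinality bound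
  have hcard : Fintype.card ι ≤ d := by
    have h1 := hai.card_le_finrank_succ
    have h2 : vectorSpan ℝ (Set.range pts) ≤ LinearMap.ker L := by
      rw [vectorSpan_def, Submodule.span_le]
      rintro u ⟨a, ha, b, hb, rfl⟩
      obtain ⟨ta, hta⟩ := hrange ha
      obtain ⟨tb, htb⟩ := hrange hb
      simp only [SetLike.mem_coe, LinearMap.mem_ker, vsub_eq_sub, map_sub]
      rw [← hta, ← htb, hLg, hLg, sub_self]
    have h3 : finrank ℝ (vectorSpan ℝ (Set.range pts)) ≤ d - 1 := by
      rw [← hker]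
      exact Submodule.finrank_mono h2
    omega
  -- choose representatives
  have hτ : ∀ i : ι, ∃ t : Fin n, g (p t) = pts i := fun i => hrange (Set.mem_range_self i)
  choose τ hτ using hτ
  let e : Fin (Fintype.card ι) ≃ ι := (Fintype.equivFin ι).symm
  refine ⟨Fintype.card ι, fun u => wt (e u), fun u => p (τ (e u)), hcard,
    fun u => (hwpos (e u)).le, ?_, fun u a => hp _ a, fun u => hpsum _, ?_⟩
  · rw [← hwsum]; exact Equiv.sum_comp e wt
  · intro x xt zc
    have hL : (∑ u : Fin (Fintype.card ι),
        wt (e u) * (p (τ (e u)) (x, zc) * p (τ (e u)) (xt, zc) /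
          (∑ x', p (τ (e u)) (x', zc)))) =
        ∑ i : ι, wt i * pts i (x, xt, zc) := by
      rw [← Equiv.sum_comp e (fun i => wt i * pts i (x, xt, zc))]
      refine Finset.sum_congr rfl fun u _ => ?_
      rw [← hτ (e u)]
    rw [hL]
    have := congrFun hwv (x, xt, zc)
    simp only [Finset.sum_apply, Pi.smul_apply, smul_eq_mul] at this
    rw [this]
    simp only [hv, Finset.sum_apply, Pi.smul_apply, smul_eq_mul]
    rw [Finset.mul_sum]
end

section
/- Let P_{XZ} and P'_{XZ} be distributions on finite 𝒳×𝒵 with |P_{XZ}(x,z) − P'_{XZ}(x,z)| ≤ ε₁ for all (x,z), and let P_{V|XZ} be a fixed channel to finite 𝒱. Define the induced pair distributions P_{XZX̃}(x,z,x̃) = Σ_v P_{XZV}(x,z,v)·P_{X|ZV}(x̃|z,v) (and analogously P'_{XZX̃}). Then for all (x,z,x̃): |P_{XZX̃}(x,z,x̃) − P'_{XZX̃}(x,z,x̃)| ≤ (1 + |𝒳| + |𝒱|)·√ε₁ + 2|𝒳||𝒱|·ε₁. -/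
open Finset
set_option maxHeartbeats 1000000

lemma ratio_le_s' (a b s : ℝ) (ha : 0 ≤ a) (has : a ≤ s) (hb : 0 ≤ b) (hbs : b ≤ s) :
    a * (b / s) ≤ s := by
  rcases (ha.trans has).eq_or_lt with h | h
  · have ha0 : a = 0 := le_antisymm (has.trans h.symm.le) ha
    rw [ha0, zero_mul]; exact ha.trans has
  · calc a * (b / s) = a * b / s := by ring
    _ ≤ s * s / s := by gcongr
    _ = s := by field_simp

lemma ratio_le_a' (a b s : ℝ) (ha : 0 ≤ a) (hb : 0 ≤ b) (hbs : b ≤ s) :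
    a * (b / s) ≤ a := by
  have : b / s ≤ 1 := div_le_one_of_le₀ hbs (hb.trans hbs)
  calc a * (b / s) ≤ a * 1 := by gcongr
  _ = a := mul_one a

/-- Per-`v` estimate on the large-mass set. -/
lemma per_v (a b s a' b' s' εa εb c δ : ℝ)
    (ha : 0 ≤ a) (has : a ≤ s) (hb : 0 ≤ b) (hbs : b ≤ s)
    (ha' : 0 ≤ a') (ha's' : a' ≤ s') (hb' : 0 ≤ b') (hb's' : b' ≤ s')
    (hδ : 0 < δ) (hδs : δ ≤ s)
    (hεa : |a - a'| ≤ εa) (hεb : |b - b'| ≤ εb) (hc : |s - s'| ≤ c) :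
    |a * b / s - a' * b' / s'| ≤ εa + (1 + εa / δ) * εb + b' * c / δ := by
  have hs : 0 < s := lt_of_lt_of_le hδ hδs
  have hεa0 : 0 ≤ εa := (abs_nonneg _).trans hεa
  have hεb0 : 0 ≤ εb := (abs_nonneg _).trans hεb
  have hc0 : 0 ≤ c := (abs_nonneg _).trans hc
  have hbs1 : b / s ≤ 1 := div_le_one_of_le₀ hbs hs.le
  have haa' : a' ≤ a + εa := by
    have := abs_le.mp hεa; linarith [this.2]
  rcases (ha'.trans ha's').eq_or_lt with h | h
  · -- s' = 0, hence a' = 0, b' = 0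
    have hs'0 : s' = 0 := h.symm
    have ha'0 : a' = 0 := le_antisymm (ha's'.trans hs'0.le) ha'
    have hb'0 : b' = 0 := le_antisymm (hb's'.trans hs'0.le) hb'
    have hale : a ≤ εa := by
      have := abs_le.mp hεa; linarith [this.1, ha'0]
    have h1 : a * b / s ≤ εa := by
      calc a * b / s = a * (b / s) := by ring
      _ ≤ εa * 1 := by
          apply mul_le_mul hale hbs1 (by positivity) hεa0
      _ = εa := mul_one εa
    have h2 : 0 ≤ a * b / s := by positivity
    rw [ha'0, hb'0]
    simp only [zero_mul, zero_div, sub_zero]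
    rw [abs_of_nonneg h2]
    have e1 : 0 ≤ (1 + εa / δ) * εb := by positivity
    have e2 : 0 ≤ b' * c / δ := by rw [hb'0]; positivity
    nlinarith [h1]
  · -- s' > 0
    have hs' : 0 < s' := h
    have h1 : |a * b / s - a' * b / s| ≤ εa := by
      have : a * b / s - a' * b / s = (a - a') * (b / s) := by ring
      rw [this, abs_mul, abs_of_nonneg (by positivity : (0:ℝ) ≤ b / s)]
      calc |a - a'| * (b / s) ≤ εa * 1 :=
        mul_le_mul hεa hbs1 (by positivity) hεa0
      _ = εa := mul_one εa
    have ha'div : a' / s ≤ 1 + εa / δ := by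
      rw [div_le_iff₀ hs]
      have h3 : εa / δ * δ = εa := by field_simp
      have h4 : εa / δ * δ ≤ εa / δ * s := by
        apply mul_le_mul_of_nonneg_left hδs (by positivity)
      nlinarith
    have h2 : |a' * b / s - a' * b' / s| ≤ (1 + εa / δ) * εb := by
      have : a' * b / s - a' * b' / s = (a' / s) * (b - b') := by ring
      rw [this, abs_mul, abs_of_nonneg (by positivity : (0:ℝ) ≤ a' / s)]
      apply mul_le_mul ha'div hεb (abs_nonneg _) (by positivity)
    have h3 : |a' * b' / s - a' * b' / s'| ≤ b' * c / δ := by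
      have heq : a' * b' / s - a' * b' / s' = a' * b' * (s' - s) / (s * s') := by
        field_simp
      rw [heq, abs_div, abs_of_pos (by positivity : (0:ℝ) < s * s'), abs_mul,
        abs_of_nonneg (by positivity : (0:ℝ) ≤ a' * b')]
      have hss : |s' - s| ≤ c := by rw [abs_sub_comm]; exact hc
      calc a' * b' * |s' - s| / (s * s') ≤ s' * b' * c / (s * s') := by
            gcongr
      _ = b' * c / s := by
            rw [div_eq_div_iff (by positivity) hs.ne']; ring
      _ ≤ b' * c / δ := by gcongr
    calc |a * b / s - a' * b' / s'|
        ≤ |a * b / s - a' * b' / s| + |a' * b' / s - a' * b' / s'| := abs_sub_le _ _ _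
    _ ≤ (|a * b / s - a' * b / s| + |a' * b / s - a' * b' / s|) + |a' * b' / s - a' * b' / s'| := by
          gcongr; exact abs_sub_le _ _ _
    _ ≤ εa + (1 + εa / δ) * εb + b' * c / δ := by linarith

lemma main_aux {𝒱 : Type*} [Fintype 𝒱]
    (p q p' q' ε₁ K M : ℝ) (w u sv sv' : 𝒱 → ℝ)
    (hp : 0 ≤ p) (hq : 0 ≤ q) (hp' : 0 ≤ p') (hq' : 0 ≤ q') (hq'1 : q' ≤ 1)
    (hw : ∀ v, 0 ≤ w v) (hw1 : ∀ v, w v ≤ 1) (hwsum : ∑ v, w v = 1)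
    (hu : ∀ v, 0 ≤ u v) (husum : ∑ v, u v = 1)
    (has : ∀ v, p * w v ≤ sv v) (hbs : ∀ v, q * u v ≤ sv v)
    (has' : ∀ v, p' * w v ≤ sv' v) (hbs' : ∀ v, q' * u v ≤ sv' v)
    (hss' : ∀ v, |sv v - sv' v| ≤ K * ε₁)
    (hεpos : 0 < ε₁) (hεsmall : ε₁ ≤ 1/4)
    (hK : 1 ≤ K) (hM : (Fintype.card 𝒱 : ℝ) ≤ M) (hM1 : 1 ≤ M)
    (hpp' : |p - p'| ≤ ε₁) (hqq' : |q - q'| ≤ ε₁) :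
    |(∑ v, p * w v * (q * u v / sv v)) - ∑ v, p' * w v * (q' * u v / sv' v)| ≤
      (1 + K + M) * Real.sqrt ε₁ + 2 * K * M * ε₁ := by
  set δ : ℝ := Real.sqrt ε₁ with hδdef
  have hδ : 0 < δ := Real.sqrt_pos.mpr hεpos
  have hδsq : δ * δ = ε₁ := Real.mul_self_sqrt hεpos.le
  have hδhalf : δ ≤ 1/2 := by
    rw [hδdef, show (1/2 : ℝ) = Real.sqrt (1/4) by
      rw [show (1/4 : ℝ) = (1/2)^2 by norm_num, Real.sqrt_sq (by norm_num)]]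
    exact Real.sqrt_le_sqrt hεsmall
  have hε0 : 0 ≤ ε₁ := hεpos.le
  have hKε : 0 ≤ K * ε₁ := by positivity
  set B : 𝒱 → ℝ := fun v =>
    if δ ≤ sv v then
      ε₁ * w v + (1 + ε₁ / δ) * (ε₁ * u v) + (q' * u v) * (K * ε₁) / δ
    else δ + K * ε₁ with hBdef
  have hpointwise : ∀ v, |p * w v * (q * u v / sv v) - p' * w v * (q' * u v / sv' v)| ≤ B v := by
    intro v
    have h0w := hw v
    have h0u := hu v
    have haa' : |p * w v - p' * w v| ≤ ε₁ * w v := by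
      rw [show p * w v - p' * w v = (p - p') * w v by ring, abs_mul,
        abs_of_nonneg h0w]
      exact mul_le_mul_of_nonneg_right hpp' h0w
    have hbb' : |q * u v - q' * u v| ≤ ε₁ * u v := by
      rw [show q * u v - q' * u v = (q - q') * u v by ring, abs_mul,
        abs_of_nonneg h0u]
      exact mul_le_mul_of_nonneg_right hqq' h0u
    by_cases hv : δ ≤ sv v
    · rw [hBdef]
      simp only [hv, if_true]
      have h := per_v (p * w v) (q * u v) (sv v) (p' * w v) (q' * u v) (sv' v)
        (ε₁ * w v) (ε₁ * u v) (K * ε₁) δ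
        (by positivity) (has v) (by positivity) (hbs v)
        (by positivity) (has' v) (by positivity) (hbs' v)
        hδ hv haa' hbb' (hss' v)
      calc |p * w v * (q * u v / sv v) - p' * w v * (q' * u v / sv' v)|
          = |(p * w v) * (q * u v) / sv v - (p' * w v) * (q' * u v) / sv' v| := by
            congr 1; ring
      _ ≤ ε₁ * w v + (1 + ε₁ * w v / δ) * (ε₁ * u v) + (q' * u v) * (K * ε₁) / δ := h
      _ ≤ ε₁ * w v + (1 + ε₁ / δ) * (ε₁ * u v) + (q' * u v) * (K * ε₁) / δ := by
            gcongr
            calc ε₁ * w v ≤ ε₁ * 1 := by gcongr; exact hw1 v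
            _ = ε₁ := mul_one ε₁
    · rw [hBdef]
      simp only [hv, if_false]
      push_neg at hv
      have ht1 : p * w v * (q * u v / sv v) ≤ sv v :=
        ratio_le_s' _ _ _ (by positivity) (has v) (by positivity) (hbs v)
      have ht1' : p' * w v * (q' * u v / sv' v) ≤ sv' v :=
        ratio_le_s' _ _ _ (by positivity) (has' v) (by positivity) (hbs' v)
      have ht0 : 0 ≤ p * w v * (q * u v / sv v) := by
        have hsv : 0 ≤ sv v := le_trans (by positivity) (has v)
        positivity
      have ht0' : 0 ≤ p' * w v * (q' * u v / sv' v) := by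
        have hsv' : 0 ≤ sv' v := le_trans (by positivity) (has' v)
        positivity
      have hs'b : sv' v ≤ sv v + K * ε₁ := by
        have := abs_le.mp (hss' v); linarith [this.1]
      rw [abs_le]
      constructor <;> nlinarith [hv.le]
  have hstep : |(∑ v, p * w v * (q * u v / sv v)) - ∑ v, p' * w v * (q' * u v / sv' v)|
      ≤ ∑ v, B v := by
    rw [← Finset.sum_sub_distrib]
    exact (Finset.abs_sum_le_sum_abs _ _).trans (Finset.sum_le_sum fun v _ => hpointwise v)
  have hbig0 : ∀ v, 0 ≤ ε₁ * w v + (1 + ε₁ / δ) * (ε₁ * u v) + (q' * u v) * (K * ε₁) / δ := by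
    intro v
    have h0w := hw v
    have h0u := hu v
    positivity
  have hBsum : ∑ v, B v ≤ ε₁ + (1 + ε₁ / δ) * ε₁ + (K * ε₁) / δ + M * (δ + K * ε₁) := by
    have hsplit : ∀ v, B v ≤
        (ε₁ * w v + (1 + ε₁ / δ) * (ε₁ * u v) + (q' * u v) * (K * ε₁) / δ)
          + (if δ ≤ sv v then 0 else δ + K * ε₁) := by
      intro v
      rw [hBdef]
      by_cases hv : δ ≤ sv v <;> simp only [hv, if_true, if_false]
      · linarith
      · linarith [hbig0 v]
    calc ∑ v, B v
        ≤ ∑ v, ((ε₁ * w v + (1 + ε₁ / δ) * (ε₁ * u v) + (q' * u v) * (K * ε₁) / δ)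
          + (if δ ≤ sv v then 0 else δ + K * ε₁)) := Finset.sum_le_sum fun v _ => hsplit v
    _ = ((∑ v, (ε₁ * w v + (1 + ε₁ / δ) * (ε₁ * u v) + (q' * u v) * (K * ε₁) / δ))
          + ∑ v, (if δ ≤ sv v then 0 else δ + K * ε₁)) := Finset.sum_add_distrib
    _ ≤ ε₁ + (1 + ε₁ / δ) * ε₁ + (K * ε₁) / δ + M * (δ + K * ε₁) := by
      have ew : (∑ v, ε₁ * w v) = ε₁ := by
        rw [← Finset.mul_sum, hwsum, mul_one]
      have eu : (∑ v, (1 + ε₁ / δ) * (ε₁ * u v)) = (1 + ε₁ / δ) * ε₁ := by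
        rw [Finset.sum_congr rfl (fun v _ => show (1 + ε₁ / δ) * (ε₁ * u v)
          = ((1 + ε₁ / δ) * ε₁) * u v by ring), ← Finset.mul_sum, husum, mul_one]
      have eq' : (∑ v, (q' * u v) * (K * ε₁) / δ) = q' * ((K * ε₁) / δ) := by
        rw [Finset.sum_congr rfl (fun v _ => show (q' * u v) * (K * ε₁) / δ
          = (q' * ((K * ε₁) / δ)) * u v by ring), ← Finset.mul_sum, husum, mul_one]
      have e1 : (∑ v, (ε₁ * w v + (1 + ε₁ / δ) * (ε₁ * u v) + (q' * u v) * (K * ε₁) / δ))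
          = ε₁ + (1 + ε₁ / δ) * ε₁ + q' * ((K * ε₁) / δ) := by
        rw [Finset.sum_add_distrib, Finset.sum_add_distrib, ew, eu, eq']
      have e2 : (∑ v : 𝒱, (if δ ≤ sv v then (0:ℝ) else δ + K * ε₁))
          ≤ M * (δ + K * ε₁) := by
        calc (∑ v : 𝒱, (if δ ≤ sv v then (0:ℝ) else δ + K * ε₁))
            ≤ ∑ v : 𝒱, (δ + K * ε₁) := by
              apply Finset.sum_le_sum
              intro v _
              by_cases hv : δ ≤ sv v <;> simp only [hv, if_true, if_false]
              · positivity
              · exact le_rfl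
        _ = (Fintype.card 𝒱 : ℝ) * (δ + K * ε₁) := by
              rw [Finset.sum_const, nsmul_eq_mul, Finset.card_univ]
        _ ≤ M * (δ + K * ε₁) := by
              apply mul_le_mul_of_nonneg_right hM (by positivity)
      have e3 : q' * ((K * ε₁) / δ) ≤ (K * ε₁) / δ := by
        calc q' * ((K * ε₁) / δ) ≤ 1 * ((K * ε₁) / δ) := by
              apply mul_le_mul_of_nonneg_right hq'1 (by positivity)
        _ = (K * ε₁) / δ := one_mul _
      rw [e1]
      linarith
  have hdiv : ε₁ / δ = δ := by
    rw [← hδsq]; field_simp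
  have hKM : (1:ℝ) ≤ K * M := by nlinarith
  have hfin : ε₁ + (1 + ε₁ / δ) * ε₁ + (K * ε₁) / δ + M * (δ + K * ε₁)
      ≤ (1 + K + M) * δ + 2 * K * M * ε₁ := by
    rw [mul_div_assoc, hdiv]
    have h3 : δ * ε₁ ≤ (1/2) * ε₁ := mul_le_mul_of_nonneg_right hδhalf hε0
    have h4 : ε₁ ≤ δ * (1/2) := by
      rw [← hδsq]; exact mul_le_mul_of_nonneg_left hδhalf hδ.le
    have h5 : 1 * ε₁ ≤ K * M * ε₁ := mul_le_mul_of_nonneg_right hKM hε0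
    nlinarith [h3, h4, h5]
  exact (hstep.trans hBsum).trans hfin


/-- continuity of the induced pairwise distribution in the base
distribution.  With `P_{XZV}(x,z,v) = P(x,z)·V(v|x,z)` and
`P_{XZX̃}(x,z,x̃) = Σ_v P_{XZV}(x,z,v)·P_{XZV}(x̃,z,v)/P_{ZV}(z,v)`
(`0/0 = 0`), if `|P − P'| ≤ ε₁` pointwise then for all `(x,z,x̃)` the induced
pairwise distributions differ by at most
`(1 + |𝒳| + |𝒱|)·√ε₁ + 2·|𝒳|·|𝒱|·ε₁`. -/
theorem induced_pairwise_continuity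
    {𝒳 𝒵 𝒱 : Type*} [Fintype 𝒳] [Fintype 𝒵] [Fintype 𝒱]
    (P P' : 𝒳 × 𝒵 → ℝ) (V : 𝒳 × 𝒵 → 𝒱 → ℝ) (ε₁ : ℝ) (hε : 0 ≤ ε₁)
    (hP : ∀ a, 0 ≤ P a) (hPsum : ∑ a, P a = 1)
    (hP' : ∀ a, 0 ≤ P' a) (hP'sum : ∑ a, P' a = 1)
    (hV : ∀ a v, 0 ≤ V a v) (hVsum : ∀ a, ∑ v, V a v = 1)
    (hclose : ∀ a, |P a - P' a| ≤ ε₁) :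
    ∀ x z xt,
      |(∑ v, P (x, z) * V (x, z) v *
            (P (xt, z) * V (xt, z) v / (∑ x', P (x', z) * V (x', z) v))) -
          (∑ v, P' (x, z) * V (x, z) v *
            (P' (xt, z) * V (xt, z) v / (∑ x', P' (x', z) * V (x', z) v)))| ≤
        (1 + (Fintype.card 𝒳 : ℝ) + (Fintype.card 𝒱 : ℝ)) * Real.sqrt ε₁ +
          2 * (Fintype.card 𝒳 : ℝ) * (Fintype.card 𝒱 : ℝ) * ε₁ := by
  intro x z xt
  have hVne : Nonempty 𝒱 := by
    by_contra h
    rw [not_nonempty_iff] at h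
    have h1 := hVsum (x, z)
    rw [Finset.univ_eq_empty, Finset.sum_empty] at h1
    norm_num at h1
  have hXne : Nonempty 𝒳 := ⟨x⟩
  have cardX1 : (1:ℝ) ≤ (Fintype.card 𝒳 : ℝ) := by
    have : 0 < Fintype.card 𝒳 := Fintype.card_pos
    exact_mod_cast this
  have cardV1 : (1:ℝ) ≤ (Fintype.card 𝒱 : ℝ) := by
    have : 0 < Fintype.card 𝒱 := Fintype.card_pos
    exact_mod_cast this
  have hV1 : ∀ a v, V a v ≤ 1 := by
    intro a v
    have h1 := Finset.single_le_sum (f := fun v => V a v) (fun v _ => hV a v) (Finset.mem_univ v)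
    rwa [hVsum a] at h1
  have hP1 : ∀ a, P a ≤ 1 := by
    intro a
    have h1 := Finset.single_le_sum (f := fun a => P a) (fun a _ => hP a) (Finset.mem_univ a)
    rwa [hPsum] at h1
  have hP'1 : ∀ a, P' a ≤ 1 := by
    intro a
    have h1 := Finset.single_le_sum (f := fun a => P' a) (fun a _ => hP' a) (Finset.mem_univ a)
    rwa [hP'sum] at h1
  by_cases h0 : ε₁ = 0
  · -- trivial: P = P'
    have hPeq : P = P' := funext fun a => by
      have h := hclose a
      rw [h0] at h
      have := abs_nonpos_iff.mp h
      linarith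
    subst h0
    rw [hPeq, sub_self, abs_zero]
    simp [Real.sqrt_zero]
  have hεpos : 0 < ε₁ := lt_of_le_of_ne hε (Ne.symm h0)
  by_cases hsmall : ε₁ ≤ 1/4
  · -- main case: apply main_aux
    apply main_aux (P (x, z)) (P (xt, z)) (P' (x, z)) (P' (xt, z)) ε₁
        ((Fintype.card 𝒳 : ℝ)) ((Fintype.card 𝒱 : ℝ))
        (fun v => V (x, z) v) (fun v => V (xt, z) v)
        (fun v => ∑ x', P (x', z) * V (x', z) v)
        (fun v => ∑ x', P' (x', z) * V (x', z) v)
        (hP _) (hP _) (hP' _) (hP' _) (hP'1 _)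
        (fun v => hV _ v) (fun v => hV1 _ v) (hVsum (x, z))
        (fun v => hV _ v) (hVsum (xt, z))
    · exact fun v => Finset.single_le_sum (f := fun x' => P (x', z) * V (x', z) v)
        (fun x' _ => mul_nonneg (hP _) (hV _ _)) (Finset.mem_univ x)
    · exact fun v => Finset.single_le_sum (f := fun x' => P (x', z) * V (x', z) v)
        (fun x' _ => mul_nonneg (hP _) (hV _ _)) (Finset.mem_univ xt)
    · exact fun v => Finset.single_le_sum (f := fun x' => P' (x', z) * V (x', z) v)
        (fun x' _ => mul_nonneg (hP' _) (hV _ _)) (Finset.mem_univ x)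
    · exact fun v => Finset.single_le_sum (f := fun x' => P' (x', z) * V (x', z) v)
        (fun x' _ => mul_nonneg (hP' _) (hV _ _)) (Finset.mem_univ xt)
    · -- |sv - sv'| ≤ K ε₁
      intro v
      rw [← Finset.sum_sub_distrib]
      calc |∑ x', (P (x', z) * V (x', z) v - P' (x', z) * V (x', z) v)|
          ≤ ∑ x', |P (x', z) * V (x', z) v - P' (x', z) * V (x', z) v| :=
            Finset.abs_sum_le_sum_abs _ _
      _ ≤ ∑ _x' : 𝒳, ε₁ := by
            apply Finset.sum_le_sum
            intro x' _
            rw [show P (x', z) * V (x', z) v - P' (x', z) * V (x', z) v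
              = (P (x', z) - P' (x', z)) * V (x', z) v by ring, abs_mul,
              abs_of_nonneg (hV _ _)]
            calc |P (x', z) - P' (x', z)| * V (x', z) v ≤ ε₁ * 1 :=
              mul_le_mul (hclose _) (hV1 _ _) (hV _ _) hε
            _ = ε₁ := mul_one ε₁
      _ = (Fintype.card 𝒳 : ℝ) * ε₁ := by
            rw [Finset.sum_const, nsmul_eq_mul, Finset.card_univ]
    · exact hεpos
    · exact hsmall
    · exact cardX1
    · exact le_rfl
    · exact cardV1
    · exact hclose (x, z)
    · exact hclose (xt, z)
  · -- trivial case: ε₁ > 1/4, LHS ≤ 2 ≤ RHS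
    push_neg at hsmall
    have hterm : ∀ (Q : 𝒳 × 𝒵 → ℝ), (∀ a, 0 ≤ Q a) → (∀ a, Q a ≤ 1) →
        (0 ≤ ∑ v, Q (x, z) * V (x, z) v *
            (Q (xt, z) * V (xt, z) v / ∑ x', Q (x', z) * V (x', z) v)) ∧
        (∑ v, Q (x, z) * V (x, z) v *
            (Q (xt, z) * V (xt, z) v / ∑ x', Q (x', z) * V (x', z) v)) ≤ 1 := by
      intro Q hQ hQ1
      constructor
      · apply Finset.sum_nonneg
        intro v _
        have hs : 0 ≤ ∑ x', Q (x', z) * V (x', z) v :=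
          Finset.sum_nonneg fun x' _ => mul_nonneg (hQ _) (hV _ _)
        exact mul_nonneg (mul_nonneg (hQ _) (hV _ _))
          (div_nonneg (mul_nonneg (hQ _) (hV _ _)) hs)
      · calc (∑ v, Q (x, z) * V (x, z) v *
            (Q (xt, z) * V (xt, z) v / ∑ x', Q (x', z) * V (x', z) v))
            ≤ ∑ v, Q (x, z) * V (x, z) v := by
              apply Finset.sum_le_sum
              intro v _
              exact ratio_le_a' _ _ _ (mul_nonneg (hQ _) (hV _ _))
                (mul_nonneg (hQ _) (hV _ _))
                (Finset.single_le_sum (f := fun x' => Q (x', z) * V (x', z) v)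
                  (fun x' _ => mul_nonneg (hQ _) (hV _ _)) (Finset.mem_univ xt))
        _ = Q (x, z) * ∑ v, V (x, z) v := by rw [Finset.mul_sum]
        _ = Q (x, z) := by rw [hVsum, mul_one]
        _ ≤ 1 := hQ1 _
    obtain ⟨hT0, hT1⟩ := hterm P hP hP1
    obtain ⟨hT0', hT1'⟩ := hterm P' hP' hP'1
    have hsq : (1/2:ℝ) ≤ Real.sqrt ε₁ := by
      rw [show (1/2:ℝ) = Real.sqrt (1/4) by
        rw [show (1/4:ℝ) = (1/2)^2 by norm_num, Real.sqrt_sq (by norm_num)]]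
      exact Real.sqrt_le_sqrt hsmall.le
    have hprod : (3:ℝ) * (1/2) ≤
        (1 + (Fintype.card 𝒳 : ℝ) + (Fintype.card 𝒱 : ℝ)) * Real.sqrt ε₁ :=
      mul_le_mul (by linarith) hsq (by norm_num) (by linarith)
    have hKM : (1:ℝ) ≤ (Fintype.card 𝒳 : ℝ) * (Fintype.card 𝒱 : ℝ) := by nlinarith
    have hprod2 : (2:ℝ) * (1/4) ≤
        2 * (Fintype.card 𝒳 : ℝ) * (Fintype.card 𝒱 : ℝ) * ε₁ := by nlinarith
    rw [abs_le]
    constructor <;> nlinarith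
end
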